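/- Let C > 0 and let g : ℝ^m → ℝ be differentiable with gradient ∇g Lipschitz continuous with constant γ_g > 0. If u* is a global minimizer over ℝ^m of u ↦ g(u) + C‖u_+‖₀, then for every γ with 0 < γ < 1/γ_g, u* is a P-stationary point with parameter γ; that is, writing z_i = u*_i − γ(∇g(u*))_i for each i, one has u*_i = 0 if 0 < z_i ≤ √(2γC), and u*_i = z_i otherwise. -/

import Mathlib

/-!
By the descent lemma, moving the `i`-th coordinate of `u*` by `t` changes `g` by at most
`t ∂ᵢg(u*) + (γ_g/2) t²`, so global minimality of `u*` makes `u*ᵢ` a minimizer of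
`w ↦ (w - u*ᵢ) ∂ᵢg(u*) + (γ_g/2)(w - u*ᵢ)² + C[w > 0]`. Since `γ γ_g < 1`, enlarging the
curvature `γ_g` to `1/γ` makes `u*ᵢ` the *strict* minimizer of `w ↦ (w - zᵢ)²/(2γ) + C[w > 0]`.
The hard-threshold formula always gives a minimizer of that function, so it must be `u*ᵢ`.
-/

open Finset

noncomputable def l01norm {m : ℕ} (v : Fin m → ℝ) : ℕ :=
  (Finset.univ.filter fun i => 0 < v i).card

open scoped RealInnerProductSpace

theorem le_add_inner_add_sq_of_lipschitz_gradient {E : Type*} [NormedAddCommGroup E]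
    [InnerProductSpace ℝ E] [CompleteSpace E] {g : E → ℝ} {g' : E → E}
    (hg : ∀ u, HasGradientAt g (g' u) u) {L : NNReal} (hLip : LipschitzWith L g') (x v : E) :
    g (x + v) ≤ g x + ⟪g' x, v⟫ + L / 2 * ‖v‖ ^ 2 := by
  set ψ : ℝ → ℝ := fun t => g (x + t • v) - t * ⟪g' x, v⟫ - L / 2 * t ^ 2 * ‖v‖ ^ 2
  have hψ : ∀ t, HasDerivAt ψ (⟪g' (x + t • v) - g' x, v⟫ - L * t * ‖v‖ ^ 2) t := by
    intro t
    have hline : HasDerivAt (fun t : ℝ => x + t • v) v t := by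
      simpa using ((hasDerivAt_id t).smul_const v).const_add x
    have hgt := (hg (x + t • v)).hasFDerivAt.comp_hasDerivAt t hline
    have hquad := ((hasDerivAt_pow 2 t).const_mul (L / 2 : ℝ)).mul_const (‖v‖ ^ 2)
    refine ((hgt.sub ((hasDerivAt_id t).mul_const ⟪g' x, v⟫)).sub hquad).congr_deriv ?_
    simp only [InnerProductSpace.toDual_apply_apply, inner_sub_left]
    push_cast
    ring
  have hanti : AntitoneOn ψ (Set.Icc 0 1) := by
    refine antitoneOn_of_hasDerivWithinAt_nonpos (convex_Icc 0 1)
      (HasDerivAt.continuousOn fun t _ => hψ t) (fun t _ => (hψ t).hasDerivWithinAt) ?_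
    rw [interior_Icc]
    rintro t ⟨ht0, -⟩
    rw [sub_nonpos]
    have hstep : ‖g' (x + t • v) - g' x‖ ≤ L * (t * ‖v‖) := by
      simpa [dist_eq_norm, norm_smul, abs_of_pos ht0] using hLip.dist_le_mul (x + t • v) x
    calc ⟪g' (x + t • v) - g' x, v⟫ ≤ ‖g' (x + t • v) - g' x‖ * ‖v‖ := real_inner_le_norm _ _
      _ ≤ L * (t * ‖v‖) * ‖v‖ := by gcongr
      _ = L * t * ‖v‖ ^ 2 := by ring
  have h01 := hanti (Set.left_mem_Icc.2 zero_le_one) (Set.right_mem_Icc.2 zero_le_one) zero_le_one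
  simp only [ψ, zero_smul, add_zero, one_smul, zero_mul, one_pow, mul_one, one_mul, sub_zero] at h01
  linarith

theorem l01norm_update_add {m : ℕ} (v : Fin m → ℝ) (i : Fin m) (w : ℝ) :
    l01norm (Function.update v i w) + (if 0 < v i then 1 else 0) =
      l01norm v + if 0 < w then 1 else 0 := by
  simp only [l01norm, card_filter]
  rw [← add_sum_erase _ _ (mem_univ i), ← add_sum_erase _ _ (mem_univ i), Function.update_self,
    sum_congr rfl fun j hj => by rw [Function.update_of_ne (ne_of_mem_erase hj)]]
  ring

theorem coord_descent_of_isMinimizer {m : ℕ} {C : ℝ} {g : EuclideanSpace ℝ (Fin m) → ℝ}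
    {g' : EuclideanSpace ℝ (Fin m) → EuclideanSpace ℝ (Fin m)}
    (hg : ∀ u, HasGradientAt g (g' u) u) {L : NNReal} (hLip : LipschitzWith L g')
    {ustar : EuclideanSpace ℝ (Fin m)}
    (hmin : ∀ u : EuclideanSpace ℝ (Fin m),
      g ustar + C * (l01norm (fun i => ustar i) : ℝ) ≤ g u + C * (l01norm (fun i => u i) : ℝ))
    (i : Fin m) (t : ℝ) :
    C * (if 0 < ustar i then 1 else 0) ≤
      t * g' ustar i + L / 2 * t ^ 2 + C * (if 0 < ustar i + t then 1 else 0) := by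
  have hdescent :=
    le_add_inner_add_sq_of_lipschitz_gradient hg hLip ustar (EuclideanSpace.single i t)
  rw [EuclideanSpace.inner_single_right, conj_trivial, PiLp.norm_single, Real.norm_eq_abs,
    sq_abs] at hdescent
  have hcoord : (fun j => (ustar + EuclideanSpace.single i t) j) =
      Function.update (fun j => ustar j) i (ustar i + t) := by
    ext j
    rcases eq_or_ne j i with rfl | hj <;> simp [*]
  have hcount : (l01norm fun j => (ustar + EuclideanSpace.single i t) j : ℝ) +
      (if 0 < ustar i then 1 else 0) =
        l01norm (fun j => ustar j) + if 0 < ustar i + t then 1 else 0 := by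
    rw [hcoord]
    have := congrArg (Nat.cast (R := ℝ)) (l01norm_update_add (fun j => ustar j) i (ustar i + t))
    push_cast [Nat.cast_ite] at this
    exact this
  linear_combination hmin (ustar + EuclideanSpace.single i t) + hdescent + C * hcount

noncomputable def l01ProxObjective (γ C z w : ℝ) : ℝ :=
  (w - z) ^ 2 / (2 * γ) + C * if 0 < w then 1 else 0

/-- At the tie `z = √(2γC)` both `0` and `z` minimize `l01ProxObjective γ C z`; this choice
matches the definition of P-stationarity. -/
noncomputable def l01Prox (γ C z : ℝ) : ℝ := if 0 < z ∧ z ≤ √(2 * γ * C) then 0 else z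

section l01Prox

variable {γ C z w : ℝ}

theorem l01ProxObjective_of_pos (hw : 0 < w) :
    l01ProxObjective γ C z w = (w - z) ^ 2 / (2 * γ) + C := by
  rw [l01ProxObjective, if_pos hw, mul_one]

theorem l01ProxObjective_of_nonpos (hw : w ≤ 0) :
    l01ProxObjective γ C z w = (w - z) ^ 2 / (2 * γ) := by
  rw [l01ProxObjective, if_neg (not_lt.2 hw), mul_zero, add_zero]

theorem l01ProxObjective_l01Prox_le (hγ : 0 < γ) (hC : 0 ≤ C) (z w : ℝ) :
    l01ProxObjective γ C z (l01Prox γ C z) ≤ l01ProxObjective γ C z w := by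
  have hquad : 0 ≤ (w - z) ^ 2 / (2 * γ) := by positivity
  have hself : (z - z) ^ 2 / (2 * γ) = 0 := by simp
  have hfar : w ≤ 0 → 0 < z → (0 - z) ^ 2 / (2 * γ) ≤ (w - z) ^ 2 / (2 * γ) := fun hw hz =>
    div_le_div_of_nonneg_right (by nlinarith) (by positivity)
  have hsqrt : 0 < z → (z ≤ √(2 * γ * C) ↔ (0 - z) ^ 2 / (2 * γ) ≤ C) := fun hz => by
    rw [zero_sub, neg_sq, div_le_iff₀ (by positivity), Real.le_sqrt hz.le (by positivity),
      mul_comm C]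
  unfold l01Prox
  split_ifs with hthr
  · obtain ⟨hz, hzle⟩ := hthr
    rw [l01ProxObjective_of_nonpos le_rfl]
    rcases lt_or_ge 0 w with hw | hw
    · rw [l01ProxObjective_of_pos hw]
      linarith [(hsqrt hz).1 hzle]
    · rw [l01ProxObjective_of_nonpos hw]
      exact hfar hw hz
  · rcases le_or_gt z 0 with hz | hz
    · rw [l01ProxObjective_of_nonpos hz, hself]
      unfold l01ProxObjective
      positivity
    · have hC_lt := not_le.1 <| (hsqrt hz).not.1 fun h => hthr ⟨hz, h⟩
      rw [l01ProxObjective_of_pos hz, hself]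
      rcases lt_or_ge 0 w with hw | hw
      · rw [l01ProxObjective_of_pos hw]
        linarith
      · rw [l01ProxObjective_of_nonpos hw]
        linarith [hfar hw hz]

theorem eq_l01Prox_of_forall_lt (hγ : 0 < γ) (hC : 0 ≤ C) {a : ℝ}
    (hmin : ∀ w ≠ a, l01ProxObjective γ C z a < l01ProxObjective γ C z w) :
    a = l01Prox γ C z := by
  by_contra hne
  exact (hmin _ (Ne.symm hne)).not_ge (l01ProxObjective_l01Prox_le hγ hC z a)

theorem l01ProxObjective_lt_of_descent {L d a : ℝ} (hγ : 0 < γ) (hγL : γ * L < 1)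
    (hdescent : ∀ t, C * (if 0 < a then 1 else 0) ≤
      t * d + L / 2 * t ^ 2 + C * (if 0 < a + t then 1 else 0)) (w : ℝ) (hw : w ≠ a) :
    l01ProxObjective γ C (a - γ * d) a < l01ProxObjective γ C (a - γ * d) w := by
  have ht : 0 < (w - a) ^ 2 := sq_pos_of_ne_zero (sub_ne_zero.2 hw)
  have hcurv : L / 2 * (w - a) ^ 2 < (w - a) ^ 2 / (2 * γ) := by
    rw [lt_div_iff₀ (by positivity)]
    nlinarith
  have hexpand : (w - (a - γ * d)) ^ 2 / (2 * γ) - (a - (a - γ * d)) ^ 2 / (2 * γ) =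
      (w - a) * d + (w - a) ^ 2 / (2 * γ) := by
    field_simp
    ring
  have := hdescent (w - a)
  rw [add_sub_cancel] at this
  unfold l01ProxObjective
  linarith

end l01Prox

theorem global_min_is_PStationary_general_general {m : ℕ} (C : ℝ) (hC : 0 < C)
    (g : EuclideanSpace ℝ (Fin m) → ℝ)
    (g' : EuclideanSpace ℝ (Fin m) → EuclideanSpace ℝ (Fin m))
    (hg : ∀ u, HasGradientAt g (g' u) u)
    (γg : NNReal) (hLip : LipschitzWith γg g')
    (ustar : EuclideanSpace ℝ (Fin m))
    (hmin : ∀ u : EuclideanSpace ℝ (Fin m),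
      g ustar + C * (l01norm (fun i => ustar i) : ℝ)
        ≤ g u + C * (l01norm (fun i => u i) : ℝ)) :
    ∀ γ : ℝ, 0 < γ → γ < 1 / (γg : ℝ) →
      (∀ i, (0 < ustar i - γ * g' ustar i ∧
          ustar i - γ * g' ustar i ≤ Real.sqrt (2 * γ * C)) → ustar i = 0) ∧
      (∀ i, ¬(0 < ustar i - γ * g' ustar i ∧
          ustar i - γ * g' ustar i ≤ Real.sqrt (2 * γ * C)) →
          ustar i = ustar i - γ * g' ustar i) := by
  intro γ hγ hγLip
  have hγL : γ * γg < 1 := by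
    rcases (γg.coe_nonneg).eq_or_lt with hL | hL
    · rw [← hL, mul_zero]; exact one_pos
    · rwa [lt_div_iff₀ hL] at hγLip
  have hprox : ∀ i, ustar i = l01Prox γ C (ustar i - γ * g' ustar i) := fun i =>
    eq_l01Prox_of_forall_lt hγ hC.le <| l01ProxObjective_lt_of_descent hγ hγL <|
      coord_descent_of_isMinimizer hg hLip hmin i
  exact ⟨fun i hi => (hprox i).trans (if_pos hi), fun i hi => (hprox i).trans (if_neg hi)⟩

/-- if `g` is differentiable with `γ_g`-Lipschitz gradient and `u*`
globally minimizes `u ↦ g(u) + C‖u₊‖₀`, then for every `0 < γ < 1/γ_g`, `u*` is a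
P-stationary point with parameter `γ`: componentwise, with
`z_i = u*_i − γ(∇g(u*))_i`, one has `u*_i = 0` if `0 < z_i ≤ √(2γC)` and
`u*_i = z_i` otherwise. -/
theorem global_min_is_PStationary_general {m : ℕ} (C : ℝ) (hC : 0 < C)
    (g : EuclideanSpace ℝ (Fin m) → ℝ)
    (g' : EuclideanSpace ℝ (Fin m) → EuclideanSpace ℝ (Fin m))
    (hg : ∀ u, HasGradientAt g (g' u) u)
    (γg : NNReal) (hγg : 0 < γg) (hLip : LipschitzWith γg g')
    (ustar : EuclideanSpace ℝ (Fin m))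
    (hmin : ∀ u : EuclideanSpace ℝ (Fin m),
      g ustar + C * (l01norm (fun i => ustar i) : ℝ)
        ≤ g u + C * (l01norm (fun i => u i) : ℝ)) :
    ∀ γ : ℝ, 0 < γ → γ < 1 / (γg : ℝ) →
      (∀ i, (0 < ustar i - γ * g' ustar i ∧
          ustar i - γ * g' ustar i ≤ Real.sqrt (2 * γ * C)) → ustar i = 0) ∧
      (∀ i, ¬(0 < ustar i - γ * g' ustar i ∧
          ustar i - γ * g' ustar i ≤ Real.sqrt (2 * γ * C)) →
          ustar i = ustar i - γ * g' ustar i) :=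
  global_min_is_PStationary_general_general C hC g g' hg γg hLip ustar hmin
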